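/- Fredholm index of the projection restricted to a finite-codimensional closed subspace: Let E be a Fréchet space, n ∈ ℕ, and let S be a closed linear subspace of E × ℝⁿ of finite codimension m (i.e., dim((E × ℝⁿ)/S) = m). Let π : S → E be the restriction to S of the projection E × ℝⁿ → E onto the first factor. Then the kernel of π equals S ∩ ({0} × ℝⁿ) and is finite-dimensional (of dimension at most n), the image π(S) is a closed subspace of finite codimension in E, and dim ker π − dim(E/π(S)) = n − m. -/

import Mathlib

/-!
Write `Q = (E × ℝⁿ) ⧸ S` and `g : ℝⁿ → Q`, `y ↦ [(0, y)]`. Then `ker π ≅ ker g`, and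
`x ↦ [(x, 0)]` induces `E ⧸ π(S) ≅ Q ⧸ range g`, so rank–nullity for `g` gives the index
`n - m`. Since `S` is closed, `Q` is Hausdorff, so the finite-dimensional subspace `range g` is
closed, and `π(S)` is its preimage under the continuous map `x ↦ [(x, 0)]`.
-/

open LinearMap Module

namespace Submodule

section Algebra

variable {R M N : Type*} [Ring R] [AddCommGroup M] [Module R M] [AddCommGroup N] [Module R N]
  (S : Submodule R (M × N))

theorem map_fst_eq_comap_range :
    S.map (LinearMap.fst R M N) = (range (S.mkQ ∘ₗ inr R M N)).comap (S.mkQ ∘ₗ inl R M N) := by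
  ext x
  simp only [mem_map, mem_comap, mem_range, comp_apply, inl_apply, inr_apply, mkQ_apply,
    Quotient.eq, LinearMap.fst_apply]
  constructor
  · rintro ⟨⟨x, y⟩, hxy, rfl⟩
    refine ⟨-y, ?_⟩
    simpa using S.neg_mem hxy
  · rintro ⟨y, hy⟩
    refine ⟨(x, -y), ?_, rfl⟩
    simpa using S.neg_mem hy

def kerFstCompSubtypeEquiv :
    ker (LinearMap.fst R M N ∘ₗ S.subtype) ≃ₗ[R] ker (S.mkQ ∘ₗ inr R M N) where
  toFun v := ⟨(v.1 : M × N).2, by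
    obtain ⟨⟨⟨x, y⟩, hxy⟩, hx⟩ := v
    obtain rfl : x = 0 := hx
    simpa [Quotient.mk_eq_zero] using hxy⟩
  invFun y := ⟨⟨(0, y), (Quotient.mk_eq_zero S).mp (mem_ker.mp y.2)⟩, rfl⟩
  map_add' _ _ := rfl
  map_smul' _ _ := rfl
  left_inv := by
    rintro ⟨⟨⟨x, y⟩, hxy⟩, hx⟩
    obtain rfl : x = 0 := hx
    rfl
  right_inv _ := rfl

theorem range_fst_comp_subtype :
    range (LinearMap.fst R M N ∘ₗ S.subtype) = S.map (LinearMap.fst R M N) := by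
  rw [range_comp, range_subtype]

noncomputable def quotientMapFstEquiv :
    (M ⧸ S.map (LinearMap.fst R M N)) ≃ₗ[R] ((M × N) ⧸ S) ⧸ range (S.mkQ ∘ₗ inr R M N) :=
  let φ := (range (S.mkQ ∘ₗ inr R M N)).mkQ ∘ₗ S.mkQ ∘ₗ inl R M N
  have hker : ker φ = S.map (LinearMap.fst R M N) := by
    rw [ker_comp, ker_mkQ, map_fst_eq_comap_range]
  have hφ : Function.Surjective φ := by
    intro z
    obtain ⟨w, rfl⟩ := mkQ_surjective _ z
    obtain ⟨⟨x, y⟩, rfl⟩ := S.mkQ_surjective w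
    refine ⟨x, (Quotient.eq _).mpr ⟨-y, ?_⟩⟩
    simp [← Quotient.mk_sub]
  (quotEquivOfEq _ _ hker.symm).trans (φ.quotKerEquivOfSurjective hφ)

end Algebra

section FiniteDimensional

variable {K M N : Type*} [DivisionRing K] [AddCommGroup M] [Module K M] [AddCommGroup N]
  [Module K N] (S : Submodule K (M × N))

instance finiteDimensional_ker_fst_comp_subtype [FiniteDimensional K N] :
    FiniteDimensional K (ker (LinearMap.fst K M N ∘ₗ S.subtype)) :=
  S.kerFstCompSubtypeEquiv.symm.finiteDimensional

theorem finrank_ker_fst_comp_subtype_add_finrank_range [FiniteDimensional K N] :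
    finrank K (ker (LinearMap.fst K M N ∘ₗ S.subtype)) + finrank K (range (S.mkQ ∘ₗ inr K M N)) =
      finrank K N := by
  rw [S.kerFstCompSubtypeEquiv.finrank_eq, add_comm]
  exact finrank_range_add_finrank_ker _

variable [FiniteDimensional K ((M × N) ⧸ S)]

instance finiteDimensional_quotient_map_fst :
    FiniteDimensional K (M ⧸ S.map (LinearMap.fst K M N)) :=
  S.quotientMapFstEquiv.symm.finiteDimensional

theorem finrank_quotient_map_fst_add_finrank_range :
    finrank K (M ⧸ S.map (LinearMap.fst K M N)) + finrank K (range (S.mkQ ∘ₗ inr K M N)) =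
      finrank K ((M × N) ⧸ S) := by
  rw [S.quotientMapFstEquiv.finrank_eq]
  exact finrank_quotient_add_finrank _

theorem finrank_ker_fst_comp_subtype_sub_finrank_quotient_map_fst [FiniteDimensional K N] :
    (finrank K (ker (LinearMap.fst K M N ∘ₗ S.subtype)) : ℤ) -
        finrank K (M ⧸ S.map (LinearMap.fst K M N)) =
      finrank K N - finrank K ((M × N) ⧸ S) := by
  have hker := S.finrank_ker_fst_comp_subtype_add_finrank_range
  have hcoker := S.finrank_quotient_map_fst_add_finrank_range
  omega

end FiniteDimensional

section Topology

variable {𝕜 M N : Type*} [NontriviallyNormedField 𝕜] [CompleteSpace 𝕜]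
  [AddCommGroup M] [Module 𝕜 M] [TopologicalSpace M] [IsTopologicalAddGroup M] [ContinuousSMul 𝕜 M]
  [AddCommGroup N] [Module 𝕜 N] [TopologicalSpace N] [IsTopologicalAddGroup N] [ContinuousSMul 𝕜 N]
  [FiniteDimensional 𝕜 N]

theorem isClosed_map_fst {S : Submodule 𝕜 (M × N)} (hS : IsClosed (S : Set (M × N))) :
    IsClosed (S.map (LinearMap.fst 𝕜 M N) : Set M) := by
  -- as an instance, this makes `(M × N) ⧸ S` Hausdorff (`Submodule.t3_quotient_of_isClosed`)
  have : IsClosed (S : Set (M × N)) := hS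
  rw [map_fst_eq_comap_range]
  have hcont : Continuous (S.mkQ ∘ₗ inl 𝕜 M N) :=
    S.continuous_mkQ.comp (continuous_id.prodMk continuous_const)
  exact (closed_of_finiteDimensional (range (S.mkQ ∘ₗ inr 𝕜 M N))).preimage hcont

end Topology

end Submodule

theorem projection_restricted_fredholm_index_general
    (E : Type)
    [AddCommGroup E] [Module ℝ E] [MetricSpace E] [IsTopologicalAddGroup E]
    [ContinuousSMul ℝ E]
    (n m : ℕ)
    (S : Submodule ℝ (E × (Fin n → ℝ)))
    (hSclosed : IsClosed (S : Set (E × (Fin n → ℝ))))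
    (hSfin : FiniteDimensional ℝ ((E × (Fin n → ℝ)) ⧸ S))
    (hm : Module.finrank ℝ ((E × (Fin n → ℝ)) ⧸ S) = m) :
    ∀ π : ↥S →ₗ[ℝ] E, (∀ v : ↥S, π v = (v : E × (Fin n → ℝ)).1) →
      -- the kernel of π equals S ∩ ({0} × ℝⁿ)
      ((LinearMap.ker π : Set ↥S) = {v : ↥S | (v : E × (Fin n → ℝ)).1 = 0}) ∧
      FiniteDimensional ℝ ↥(LinearMap.ker π) ∧
      Module.finrank ℝ ↥(LinearMap.ker π) ≤ n ∧
      -- the image is closed and has finite codimension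
      IsClosed ((LinearMap.range π : Submodule ℝ E) : Set E) ∧
      FiniteDimensional ℝ (E ⧸ LinearMap.range π) ∧
      -- the index is n - m
      (Module.finrank ℝ ↥(LinearMap.ker π) : ℤ) -
        (Module.finrank ℝ (E ⧸ LinearMap.range π) : ℤ) = (n : ℤ) - (m : ℤ) := by
  intro π hπ
  obtain rfl : π = LinearMap.fst ℝ E (Fin n → ℝ) ∘ₗ S.subtype := LinearMap.ext hπ
  have hker := S.finrank_ker_fst_comp_subtype_add_finrank_range
  have hindex := S.finrank_ker_fst_comp_subtype_sub_finrank_quotient_map_fst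
  rw [finrank_fin_fun, hm] at hindex
  rw [finrank_fin_fun] at hker
  rw [Submodule.range_fst_comp_subtype]
  refine ⟨?_, inferInstance, by omega, Submodule.isClosed_map_fst hSclosed, inferInstance, hindex⟩
  ext v
  simp

/-- **Fredholm index of the projection restricted to a finite-codimensional
closed subspace.** `S ⊆ E × ℝⁿ` closed of codimension `m`; the restriction `π`
of the first projection has kernel `S ∩ ({0} × ℝⁿ)` of dimension at most `n`,
closed image of finite codimension, and index `dim ker π - codim im π = n - m`. -/
theorem projection_restricted_fredholm_index
    (E : Type)
    [AddCommGroup E] [Module ℝ E] [MetricSpace E] [IsTopologicalAddGroup E]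
    [ContinuousSMul ℝ E] [CompleteSpace E] [LocallyConvexSpace ℝ E]
    (hE : ∀ x y z : E, dist (x + z) (y + z) = dist x y)
    (n m : ℕ)
    (S : Submodule ℝ (E × (Fin n → ℝ)))
    (hSclosed : IsClosed (S : Set (E × (Fin n → ℝ))))
    (hSfin : FiniteDimensional ℝ ((E × (Fin n → ℝ)) ⧸ S))
    (hm : Module.finrank ℝ ((E × (Fin n → ℝ)) ⧸ S) = m) :
    ∀ π : ↥S →ₗ[ℝ] E, (∀ v : ↥S, π v = (v : E × (Fin n → ℝ)).1) →
      -- the kernel of π equals S ∩ ({0} × ℝⁿ)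
      ((LinearMap.ker π : Set ↥S) = {v : ↥S | (v : E × (Fin n → ℝ)).1 = 0}) ∧
      FiniteDimensional ℝ ↥(LinearMap.ker π) ∧
      Module.finrank ℝ ↥(LinearMap.ker π) ≤ n ∧
      -- the image is closed and has finite codimension
      IsClosed ((LinearMap.range π : Submodule ℝ E) : Set E) ∧
      FiniteDimensional ℝ (E ⧸ LinearMap.range π) ∧
      -- the index is n - m
      (Module.finrank ℝ ↥(LinearMap.ker π) : ℤ) -
        (Module.finrank ℝ (E ⧸ LinearMap.range π) : ℤ) = (n : ℤ) - (m : ℤ) :=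
  projection_restricted_fredholm_index_general E n m S hSclosed hSfin hm
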